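/- arXiv:2311.06732 — 2 statements merged into one kernel-verified Lean document; each statement's English description precedes it below -/
import Mathlib

section
/- Let $p$ be a positive integer and set $\delta = \min\{\frac{1}{6}, \frac{1}{p(p+1)}\}$. Then there do not exist $n \in \mathbb{N}$, $m \in \mathbb{N}^+$, elements $\gamma_1,\dots,\gamma_n \in \Phi_p \setminus \{0\}$, and real numbers $b_1,\dots,b_m \in (1-\delta, 1)$ such that $2 = \sum_{i=1}^n \gamma_i + \sum_{j=1}^m b_j$. -/
/-- The hyperstandard set `Φ_p = {1 - k/(p·m) | m ∈ ℕ⁺, 0 ≤ k ≤ p} ∩ [0,1]`. -/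
def Phi (p : ℕ) : Set ℝ :=
  {x | (∃ m k : ℕ, 0 < m ∧ k ≤ p ∧ x = 1 - (k : ℝ) / (p * m)) ∧ 0 ≤ x ∧ x ≤ 1}

/-!
Every `b j` exceeds `5/6`, so there are at most two of them.  With two, `∑ γ i` lies in `(0, 2δ)`,
but every nonzero element of `Φ_p` is at least `min (1/p) (1/2) ≥ 2δ`.  With one, `∑ γ i` lies in
`(1, 1 + δ)`.  Elements `1 - k/(p m)` with `m ≥ 2` are at least `1/2` and those with `m = 1` are
multiples of `1/p`; in each of the few possible configurations the excess over `1` is a fraction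
`e / (p m)` with `e ≥ 1` and `e (p + 1) ≥ m`, hence at least `1 / (p (p + 1)) ≥ δ`.
-/

open Finset Set

section

variable {p : ℕ} {δ : ℝ}

lemma natCast_div_mul_le_one_div {k : ℕ} (M : ℕ) (hk : k ≤ p) :
    (k : ℝ) / (p * M) ≤ 1 / M := by
  rw [div_mul_eq_div_div]
  gcongr
  exact div_le_one_of_le₀ (by exact_mod_cast hk) (Nat.cast_nonneg p)

lemma half_le_one_sub_div_mul {k M : ℕ} (hk : k ≤ p) (hM : 2 ≤ M) :
    1 / 2 ≤ 1 - (k : ℝ) / (p * M) := by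
  have hM' : (2 : ℝ) ≤ M := by exact_mod_cast hM
  have : 1 / (M : ℝ) ≤ 1 / 2 := by gcongr
  linarith [natCast_div_mul_le_one_div M hk]

lemma eq_natCast_div_or_of_mem_Phi (hp : 0 < p) {x : ℝ} (hx : x ∈ Phi p) :
    (∃ j : ℕ, x = j / p) ∨ ∃ M k : ℕ, 2 ≤ M ∧ k ≤ p ∧ x = 1 - k / (p * M) := by
  obtain ⟨⟨M, k, hM, hk, rfl⟩, -⟩ := hx
  rcases (Nat.succ_le_of_lt hM).eq_or_lt with rfl | hM
  · refine Or.inl ⟨p - k, ?_⟩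
    have : (p : ℝ) ≠ 0 := by positivity
    rw [Nat.cast_sub hk]
    field_simp
    push_cast; ring
  · exact Or.inr ⟨M, k, hM, hk, rfl⟩

lemma exists_sum_eq_natCast_div {ι : Type*} (s : Finset ι) {f : ι → ℝ}
    (h : ∀ i ∈ s, ∃ j : ℕ, f i = j / p) : ∃ J : ℕ, ∑ i ∈ s, f i = J / p :=
  Finset.sum_induction f (fun x => ∃ J : ℕ, x = J / p)
    (fun _ _ ⟨J, hJ⟩ ⟨J', hJ'⟩ => ⟨J + J', by rw [hJ, hJ']; push_cast; ring⟩)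
    ⟨0, by simp⟩ h

lemma two_mul_le_of_mem_Phi (hp : 0 < p) (hδ6 : δ ≤ 1 / 6) (hδp : δ * (p * (p + 1)) ≤ 1)
    {x : ℝ} (hx : x ∈ Phi p) (hx0 : x ≠ 0) : 2 * δ ≤ x := by
  rcases eq_natCast_div_or_of_mem_Phi hp hx with ⟨j, rfl⟩ | ⟨M, k, hM, hk, rfl⟩
  · have hj : (1 : ℝ) ≤ j := by
      have : j ≠ 0 := by rintro rfl; simp at hx0
      exact_mod_cast Nat.one_le_iff_ne_zero.2 this
    have hp' : (1 : ℝ) ≤ p := by exact_mod_cast hp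
    rw [le_div_iff₀ (by positivity)]
    nlinarith
  · linarith [half_le_one_sub_div_mul hk hM]

lemma intCast_div_notMem_Ioo (hδp : δ * (p * (p + 1)) ≤ 1) (e : ℤ) (M : ℕ)
    (he : 0 < e → (M : ℤ) ≤ e * (p + 1)) : (e : ℝ) / (p * M) ∉ Ioo 0 δ := by
  rintro ⟨h0, hlt⟩
  obtain ⟨he0, hden⟩ : (0 : ℝ) < e ∧ 0 < (p : ℝ) * M := by
    rcases div_pos_iff.1 h0 with h | ⟨-, h⟩
    · exact h
    · exact (not_lt.2 (by positivity) h).elim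
  have hM : (M : ℝ) ≤ e * (p + 1) := by exact_mod_cast he (by exact_mod_cast he0)
  refine hlt.not_ge ((le_div_iff₀ hden).2 ?_)
  have hδ0 : 0 < δ := h0.trans hlt
  calc δ * (p * M) ≤ δ * (p * (e * (p + 1))) := by gcongr
    _ = e * (δ * (p * (p + 1))) := by ring
    _ ≤ e := mul_le_of_le_one_right he0.le hδp

lemma le_natCast_div (hp : 0 < p) (hδp : δ * (p * (p + 1)) ≤ 1) {J : ℕ} (hJ : 0 < J) :
    δ ≤ J / p := by
  have : (1 : ℝ) ≤ p := by exact_mod_cast hp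
  have : (1 : ℝ) ≤ J := by exact_mod_cast hJ
  rw [le_div_iff₀ (by positivity)]
  nlinarith

lemma three_halves_le_sum {ι : Type*} {s : Finset ι} {f : ι → ℝ} (hs : 3 ≤ #s)
    (hf : ∀ i ∈ s, 1 / 2 ≤ f i) : 3 / 2 ≤ ∑ i ∈ s, f i := by
  have := card_nsmul_le_sum s f (1 / 2) hf
  rw [nsmul_eq_mul] at this
  have : (3 : ℝ) ≤ #s := by exact_mod_cast hs
  linarith

lemma natCast_div_notMem_Ioo_one (hp : 0 < p) (hδp : δ * (p * (p + 1)) ≤ 1) (J : ℕ) :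
    (J : ℝ) / p ∉ Ioo 1 (1 + δ) := by
  have hgap := intCast_div_notMem_Ioo hδp (J - p) 1 (fun he => by push_cast; nlinarith)
  have : (p : ℝ) ≠ 0 := by positivity
  rintro ⟨h1, h2⟩
  refine hgap ⟨?_, ?_⟩ <;> push_cast <;> rw [mul_one, sub_div, div_self this] <;> linarith

lemma natCast_div_add_notMem_Ioo_one (hp : 0 < p) (hδp : δ * (p * (p + 1)) ≤ 1) (J : ℕ)
    {x : ℝ} (hx : x ∈ Phi p) : (J : ℝ) / p + x ∉ Ioo 1 (1 + δ) := by
  obtain ⟨⟨M, k, hM, hk, rfl⟩, -⟩ := hx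
  have hgap := intCast_div_notMem_Ioo hδp (J * M - k) M (fun he => by
    have hJ : 1 ≤ J := Nat.one_le_iff_ne_zero.2 (by rintro rfl; simp at he; omega)
    have : (M : ℤ) ≤ J * M := by exact_mod_cast Nat.le_mul_of_pos_left M hJ
    have : (k : ℤ) ≤ p := by exact_mod_cast hk
    nlinarith)
  have : (p : ℝ) ≠ 0 := by positivity
  have : (M : ℝ) ≠ 0 := by positivity
  have hrw : (J : ℝ) / p + (1 - k / (p * M)) = 1 + ((J * M - k : ℤ) : ℝ) / (p * M) := by
    push_cast; field_simp; ring
  rw [hrw]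
  rintro ⟨h1, h2⟩
  exact hgap ⟨by linarith, by linarith⟩

lemma one_sub_add_one_sub_notMem_Ioo_one (hp : 0 < p) (hδ6 : δ ≤ 1 / 6)
    (hδp : δ * (p * (p + 1)) ≤ 1) {M k M' k' : ℕ} (hM : 2 ≤ M) (hk : k ≤ p) (hM' : 2 ≤ M')
    (hk' : k' ≤ p) : 1 - (k : ℝ) / (p * M) + (1 - k' / (p * M')) ∉ Ioo 1 (1 + δ) := by
  rintro ⟨h1, h2⟩
  have hu := natCast_div_mul_le_one_div M hk
  have hu' := natCast_div_mul_le_one_div M' hk'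
  -- `1/2 + 1/3 = 5/6 ≤ 1 - δ` forces both denominators to be `2p`
  have eq_two_of (N : ℕ) (hN : 2 ≤ N) (hN' : (1 - δ) - 1 / 2 < 1 / (N : ℝ)) : N = 2 := by
    by_contra hne
    have : (3 : ℝ) ≤ N := by exact_mod_cast (show 3 ≤ N by omega)
    have : 1 / (N : ℝ) ≤ 1 / 3 := by gcongr
    linarith
  have hMR : (2 : ℝ) ≤ M := by exact_mod_cast hM
  have hMR' : (2 : ℝ) ≤ M' := by exact_mod_cast hM'
  have : 1 / (M : ℝ) ≤ 1 / 2 := by gcongr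
  have : 1 / (M' : ℝ) ≤ 1 / 2 := by gcongr
  obtain rfl := eq_two_of M hM (by linarith)
  obtain rfl := eq_two_of M' hM' (by linarith)
  have hgap := intCast_div_notMem_Ioo hδp (2 * p - k - k') 2 (fun he => by
    have : (1 : ℤ) ≤ p := by exact_mod_cast hp
    push_cast; nlinarith)
  have : (p : ℝ) ≠ 0 := by positivity
  have hrw : 1 - (k : ℝ) / (p * (2 : ℕ)) + (1 - k' / (p * (2 : ℕ))) =
      1 + ((2 * p - k - k' : ℤ) : ℝ) / (p * (2 : ℕ)) := by
    push_cast; field_simp; ring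
  rw [hrw] at h1 h2
  exact hgap ⟨by linarith, by linarith⟩

theorem sum_notMem_Ioo_one (hp : 0 < p) (hδ6 : δ ≤ 1 / 6) (hδp : δ * (p * (p + 1)) ≤ 1)
    {ι : Type*} (s : Finset ι) {γ : ι → ℝ} (hγ : ∀ i ∈ s, γ i ∈ Phi p) :
    ∑ i ∈ s, γ i ∉ Ioo 1 (1 + δ) := by
  classical
  set B := s.filter fun i => ¬ ∃ j : ℕ, γ i = j / p
  obtain ⟨J, hJ⟩ := exists_sum_eq_natCast_div (s.filter fun i => ∃ j : ℕ, γ i = j / p)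
    fun i hi => (mem_filter.1 hi).2
  have hB : ∀ i ∈ B, i ∈ s ∧ ∃ M k : ℕ, 2 ≤ M ∧ k ≤ p ∧ γ i = 1 - k / (p * M) := fun i hi =>
    ⟨(mem_filter.1 hi).1,
      (eq_natCast_div_or_of_mem_Phi hp (hγ i (mem_filter.1 hi).1)).resolve_left (mem_filter.1 hi).2⟩
  rw [← sum_filter_add_sum_filter_not s (fun i => ∃ j : ℕ, γ i = j / p), hJ]
  change (J : ℝ) / p + ∑ i ∈ B, γ i ∉ Ioo 1 (1 + δ)
  obtain hB0 | hB1 | hB2 | hB3 : #B = 0 ∨ #B = 1 ∨ #B = 2 ∨ 3 ≤ #B := by omega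
  · rw [card_eq_zero.1 hB0, sum_empty, add_zero]
    exact natCast_div_notMem_Ioo_one hp hδp J
  · obtain ⟨a, ha⟩ := card_eq_one.1 hB1
    rw [ha, sum_singleton]
    exact natCast_div_add_notMem_Ioo_one hp hδp J (hγ a (hB a (by simp [ha])).1)
  · obtain ⟨a, c, hac, hBac⟩ := card_eq_two.1 hB2
    obtain ⟨M, k, hM, hk, hγa⟩ := (hB a (by simp [hBac])).2
    obtain ⟨M', k', hM', hk', hγc⟩ := (hB c (by simp [hBac])).2
    rw [hBac, sum_pair hac, hγa, hγc]
    rcases Nat.eq_zero_or_pos J with rfl | hJ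
    · rw [Nat.cast_zero, zero_div, zero_add]
      exact one_sub_add_one_sub_notMem_Ioo_one hp hδ6 hδp hM hk hM' hk'
    · rintro ⟨-, h⟩
      linarith [le_natCast_div hp hδp hJ, half_le_one_sub_div_mul hk hM,
        half_le_one_sub_div_mul hk' hM']
  · have := three_halves_le_sum hB3 fun i hi => by
      obtain ⟨M, k, hM, hk, hγi⟩ := (hB i hi).2
      exact hγi ▸ half_le_one_sub_div_mul hk hM
    rintro ⟨-, h⟩
    have : (0 : ℝ) ≤ J / p := by positivity
    linarith

theorem sum_notMem_Ioo_zero (hp : 0 < p) (hδ6 : δ ≤ 1 / 6) (hδp : δ * (p * (p + 1)) ≤ 1)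
    {ι : Type*} (s : Finset ι) {γ : ι → ℝ} (hγ : ∀ i ∈ s, γ i ∈ Phi p ∧ γ i ≠ 0) :
    ∑ i ∈ s, γ i ∉ Ioo 0 (2 * δ) := by
  rintro ⟨h0, h⟩
  obtain ⟨i, hi, -⟩ := exists_ne_zero_of_sum_ne_zero h0.ne'
  have := single_le_sum (fun j hj => (hγ j hj).1.2.1) hi
  linarith [two_mul_le_of_mem_Phi hp hδ6 hδp (hγ i hi).1 (hγ i hi).2]

end

theorem no_solution_sum_two (p : ℕ) (hp : 0 < p) :
    ¬ ∃ (n m : ℕ) (γ : Fin n → ℝ) (b : Fin m → ℝ), 0 < m ∧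
      (∀ i, γ i ∈ Phi p ∧ γ i ≠ 0) ∧
      (∀ j, 1 - min (1/6 : ℝ) (1 / ((p : ℝ) * (p + 1))) < b j ∧ b j < 1) ∧
      (2 : ℝ) = ∑ i, γ i + ∑ j, b j := by
  rintro ⟨n, m, γ, b, hm, hγ, hb, hsum⟩
  set δ := min (1/6 : ℝ) (1 / ((p : ℝ) * (p + 1)))
  have hδ6 : δ ≤ 1 / 6 := min_le_left _ _
  have hδp : δ * (p * (p + 1)) ≤ 1 := (le_div_iff₀ (by positivity)).1 (min_le_right _ _)
  have hγ0 : 0 ≤ ∑ i, γ i := sum_nonneg fun i _ => (hγ i).1.2.1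
  obtain _ | _ | _ | m := m
  · exact absurd hm (lt_irrefl 0)
  · rw [Fin.sum_univ_one] at hsum
    exact sum_notMem_Ioo_one hp hδ6 hδp univ (fun i _ => (hγ i).1)
      ⟨by linarith [hb 0], by linarith [hb 0]⟩
  · rw [Fin.sum_univ_two] at hsum
    exact sum_notMem_Ioo_zero hp hδ6 hδp univ (fun i _ => hγ i)
      ⟨by linarith [hb 0, hb 1], by linarith [hb 0, hb 1]⟩
  · have := card_nsmul_le_sum univ b (1 - δ) fun j _ => (hb j).1.le
    rw [nsmul_eq_mul, card_univ, Fintype.card_fin] at this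
    push_cast at this
    nlinarith
end

section
/- Let $p$ and $q > q'$ be positive integers. Define $\epsilon_1(p,q) = \min\{\gamma \mid \gamma > q, \gamma = \sum_i \gamma_i \text{ with each } \gamma_i \in \Phi_p\} - q$ and $\epsilon_2(p,q) = \frac{\epsilon_1(p,q)}{q + \epsilon_1(p,q)}$. Then $\epsilon_1(p,q) \le \epsilon_1(p,q')$ and $\epsilon_2(p,q) < \epsilon_2(p,q')$. -/
/-- The set of finite sums of elements of `Φ_p` exceeding `q`. -/
def sumsGT (p q : ℕ) : Set ℝ :=
  {x | (q : ℝ) < x ∧ ∃ (n : ℕ) (f : Fin n → ℝ), (∀ i, f i ∈ Phi p) ∧ x = ∑ i, f i}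

/-- `ε₁(p,q) = min{γ > q | γ a finite sum of elements of Φ_p} - q`. -/
noncomputable def eps1 (p q : ℕ) : ℝ := sInf (sumsGT p q) - q

/-- `ε₂(p,q) = ε₁(p,q)/(q + ε₁(p,q))`. -/
noncomputable def eps2 (p q : ℕ) : ℝ := eps1 p q / (q + eps1 p q)

theorem isWF_range_one_sub_div_succ {c : ℝ} (hc : 0 ≤ c) :
    (Set.range fun n : ℕ => 1 - c / (n + 1)).IsWF := by
  rw [← Set.image_univ]
  refine ((Set.isPWO_of_wellQuasiOrderedLE _).image_of_monotone fun a b hab => ?_).isWF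
  gcongr

theorem isWF_Phi (p : ℕ) : (Phi p).IsWF := by
  have hsub : Phi p ⊆ (Finset.range (p + 1)).sup
      fun k : ℕ => Set.range fun n : ℕ => 1 - ((k : ℝ) / p) / (n + 1) := by
    rintro x ⟨⟨m, k, hm, hk, rfl⟩, -⟩
    obtain ⟨n, rfl⟩ := Nat.exists_eq_add_of_lt hm
    rw [Finset.sup_set_eq_biUnion]
    refine Set.mem_biUnion (Finset.mem_range.2 (Nat.lt_succ_of_le hk)) ⟨n, ?_⟩
    push_cast
    rw [div_div, zero_add]
  refine ((Finset.isWF_sup _).2 fun k _ => ?_).mono hsub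
  exact isWF_range_one_sub_div_succ (by positivity)

theorem one_mem_Phi (p : ℕ) : (1 : ℝ) ∈ Phi p :=
  ⟨⟨1, 0, one_pos, Nat.zero_le p, by simp⟩, zero_le_one, le_rfl⟩

theorem sumsGT_subset_closure (p q : ℕ) :
    sumsGT p q ⊆ AddSubmonoid.closure (Phi p) := by
  rintro x ⟨-, n, f, hf, rfl⟩
  exact AddSubmonoid.sum_mem _ fun i _ => AddSubmonoid.subset_closure (hf i)

theorem isWF_sumsGT (p q : ℕ) : (sumsGT p q).IsWF :=
  ((isWF_Phi p).isPWO.addSubmonoid_closure (fun _ hx => hx.2.1)).isWF.mono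
    (sumsGT_subset_closure p q)

theorem add_natCast_mem_sumsGT {p q : ℕ} {x : ℝ} (hx : x ∈ sumsGT p q) (r : ℕ) :
    x + r ∈ sumsGT p (q + r) := by
  obtain ⟨hqx, n, f, hf, rfl⟩ := hx
  refine ⟨by push_cast; linarith, n + r, Fin.append f fun _ => 1, ?_, ?_⟩
  · exact Fin.addCases (by simpa using hf) (by simpa using fun _ => one_mem_Phi p)
  · simp [Fin.sum_univ_add]

theorem natCast_add_one_mem_sumsGT (p q : ℕ) : ((q : ℝ) + 1) ∈ sumsGT p q :=
  ⟨by linarith, q + 1, fun _ => 1, fun _ => one_mem_Phi p, by simp⟩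

theorem sInf_sumsGT_mem (p q : ℕ) : sInf (sumsGT p q) ∈ sumsGT p q := by
  have hne : (sumsGT p q).Nonempty := ⟨_, natCast_add_one_mem_sumsGT p q⟩
  have hwf := isWF_sumsGT p q
  rw [(show IsLeast _ _ from ⟨hwf.min_mem hne, fun _ => hwf.min_le hne⟩).csInf_eq]
  exact hwf.min_mem hne

theorem eps1_pos (p q : ℕ) : 0 < eps1 p q :=
  sub_pos.2 (sInf_sumsGT_mem p q).1

theorem eps1_antitone (p : ℕ) : Antitone (eps1 p) := by
  intro q' q h
  obtain ⟨r, rfl⟩ := Nat.exists_eq_add_of_le h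
  have hbdd : BddBelow (sumsGT p (q' + r)) := ⟨_, fun _ hx => hx.1.le⟩
  have := csInf_le hbdd (add_natCast_mem_sumsGT (sInf_sumsGT_mem p q') r)
  unfold eps1
  push_cast
  linarith

theorem eps2_strictAnti (p : ℕ) : StrictAnti (eps2 p) := by
  intro q' q h
  have hq : (q' : ℝ) < q := by exact_mod_cast h
  have he := eps1_pos p q
  have he' := eps1_pos p q'
  have hle := eps1_antitone p h.le
  unfold eps2
  calc eps1 p q / (q + eps1 p q) ≤ eps1 p q' / (q + eps1 p q') := by
        rw [div_le_div_iff₀ (by positivity) (by positivity)]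
        nlinarith
    _ < eps1 p q' / (q' + eps1 p q') := by gcongr

theorem eps_antitone_general (p q q' : ℕ) (h : q' < q) :
    eps1 p q ≤ eps1 p q' ∧ eps2 p q < eps2 p q' :=
  ⟨eps1_antitone p h.le, eps2_strictAnti p h⟩

theorem eps_antitone (p q q' : ℕ) (hp : 0 < p) (hq' : 0 < q') (h : q' < q) :
    eps1 p q ≤ eps1 p q' ∧ eps2 p q < eps2 p q' :=
  eps_antitone_general p q q' h
end
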